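/- There exists an absolute constant C such that for all x ≥ 2, |D(x,2,x) − (1 − 1/e)·(log x)/log 2| ≤ C. -/

import Mathlib

open Real Filter

open scoped Classical

noncomputable section

/-- The finite set of primes not exceeding `y`. -/
def primesLE (y : ℝ) : Finset ℕ := (Finset.range (⌊y⌋₊ + 1)).filter Nat.Prime

/-- `ζ(s, y) = ∏_{p ≤ y} (1 - p^{-s})⁻¹`. -/
def zetaS (s y : ℝ) : ℝ := ∏ p ∈ primesLE y, (1 - (p : ℝ) ^ (-s))⁻¹

/-- `φ_y(s) = ∑_{p ≤ y} log p / (p^s - 1)`. -/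
def phiS (y s : ℝ) : ℝ := ∑ p ∈ primesLE y, Real.log p / ((p : ℝ) ^ s - 1)

/-- The saddle point `α(x, y)`: the unique positive solution of `φ_y(α) = log x`. -/
def saddle (x y : ℝ) : ℝ := Classical.epsilon fun s : ℝ => 0 < s ∧ phiS y s = Real.log x

/-- The set `S(X, y)` of `y`-friable integers `n` with `1 ≤ n ≤ X`, as a finset. -/
def smoothSet (X y : ℝ) : Finset ℕ :=
  (Finset.Icc 1 ⌊X⌋₊).filter fun n => ∀ p ∈ n.primeFactors, (p : ℝ) ≤ y

/-- `Ψ(x, y) = #S(x, y)`. -/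
def Psi (x y : ℝ) : ℝ := (smoothSet x y).card

/-- `D(x, y, z) = ∑_{n ∈ S(z, y)} n^{-α(x, y)}`. -/
def Dxyz (x y z : ℝ) : ℝ := ∑ n ∈ smoothSet z y, (n : ℝ) ^ (-(saddle x y))

/-- `P(x, y, z) = D(x, y, z) / ζ(α, y)`. -/
def Pxyz (x y z : ℝ) : ℝ := Dxyz x y z / zetaS (saddle x y) y

/-- `u = log x / log y`. -/
def uxy (x y : ℝ) : ℝ := Real.log x / Real.log y

/-- `ū = min(y, log x) / log y`. -/
def ubar (x y : ℝ) : ℝ := min y (Real.log x) / Real.log y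

/-- `Θ(x, y) > 0`, defined by `Θ² = |φ'_y(α)| / (log y)²`. -/
def Theta (x y : ℝ) : ℝ := Real.sqrt (|deriv (phiS y) (saddle x y)| / (Real.log y) ^ 2)

/-- The standard normal distribution function `Φ`. -/
def gaussPhi (h : ℝ) : ℝ := (Real.sqrt (2 * Real.pi))⁻¹ * ∫ t in Set.Iic h, Real.exp (-t ^ 2 / 2)

/-! For `y = 2` everything is explicit. `S(X, 2)` consists of the powers `2 ^ k ≤ X`, and the
saddle-point equation `log 2 / (2 ^ α - 1) = log x` gives `2 ^ α = 1 + 1 / u` with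
`u = log x / log 2`. So `D(x, 2, x)` is the geometric sum
`∑_{k ≤ ⌊u⌋} (1 + 1 / u)⁻ᵏ = (1 - (1 + 1 / u)^-(⌊u⌋ + 1)) (u + 1)`, and since
`t / (1 + t) ≤ log (1 + t) ≤ t`, the power `(1 + 1 / u)^-(⌊u⌋ + 1)` is within `1 / u` of `e⁻¹`. -/

open Finset

lemma abs_exp_sub_exp_le_of_nonpos {a b : ℝ} (ha : a ≤ 0) (hb : b ≤ 0) :
    |exp a - exp b| ≤ |a - b| := by
  wlog hab : a ≤ b generalizing a b
  · rw [abs_sub_comm, abs_sub_comm a]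
    exact this hb ha (le_of_not_ge hab)
  have hexp : exp b * (1 + (a - b)) ≤ exp a := by
    rw [show exp a = exp b * exp (a - b) by rw [← exp_add]; ring_nf]
    gcongr
    linarith [add_one_le_exp (a - b)]
  have hb1 : exp b ≤ 1 := exp_le_one_iff.2 hb
  rw [abs_sub_comm, abs_of_nonneg (sub_nonneg.2 (exp_le_exp.2 hab)), abs_sub_comm,
    abs_of_nonneg (sub_nonneg.2 hab)]
  nlinarith [exp_pos b]

lemma abs_inv_one_add_pow_sub_exp_neg_one_le {t : ℝ} (ht : 0 < t) {n : ℕ} (h₁ : 1 ≤ n * t)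
    (h₂ : n * t ≤ 1 + t) : |(1 + t)⁻¹ ^ n - exp (-1)| ≤ t := by
  have h1t : 0 < 1 + t := by linarith
  have hlog_le : log (1 + t) ≤ t := by linarith [log_le_sub_one_of_pos h1t]
  have hlog_ge : t / (1 + t) ≤ log (1 + t) := by
    convert one_sub_inv_le_log_of_pos h1t using 1
    field_simp
    ring
  have hpow : (1 + t)⁻¹ ^ n = exp (-(n * log (1 + t))) := by
    rw [← exp_log h1t, ← exp_neg, ← exp_nat_mul, log_exp]; ring_nf
  have hs_le : n * log (1 + t) ≤ 1 + t := by
    calc n * log (1 + t) ≤ n * t := by gcongr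
      _ ≤ 1 + t := h₂
  have hs_ge : 1 - t ≤ n * log (1 + t) := by
    calc 1 - t ≤ 1 / (1 + t) := by rw [le_div_iff₀ h1t]; nlinarith
      _ ≤ n * t / (1 + t) := by gcongr
      _ = n * (t / (1 + t)) := by ring
      _ ≤ n * log (1 + t) := by gcongr
  have hs_nonneg : 0 ≤ n * log (1 + t) := by
    have := log_nonneg (by linarith : 1 ≤ 1 + t); positivity
  rw [hpow]
  calc |exp (-(n * log (1 + t))) - exp (-1)| ≤ |-(n * log (1 + t)) - -1| :=
        abs_exp_sub_exp_le_of_nonpos (by linarith) (by norm_num)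
    _ ≤ t := abs_le.2 ⟨by linarith, by linarith⟩

lemma geom_sum_inv_one_add {t : ℝ} (ht : 0 < t) (n : ℕ) :
    ∑ k ∈ range n, (1 + t)⁻¹ ^ k = (1 - (1 + t)⁻¹ ^ n) * (t⁻¹ + 1) := by
  have hq : (1 + t)⁻¹ ≠ 1 := by
    rw [Ne, inv_eq_one]; linarith
  rw [geom_sum_eq hq]
  field_simp [ht.ne']
  ring

lemma abs_geom_sum_floor_sub_le_two {u : ℝ} (hu : 0 < u) :
    |∑ k ∈ range (⌊u⌋₊ + 1), (1 + u⁻¹)⁻¹ ^ k - (1 - exp (-1)) * u| ≤ 2 := by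
  have hn₁ : 1 ≤ ((⌊u⌋₊ + 1 : ℕ) : ℝ) * u⁻¹ := by
    rw [← div_eq_mul_inv, le_div_iff₀ hu, one_mul]
    exact_mod_cast (Nat.lt_floor_add_one u).le
  have hn₂ : ((⌊u⌋₊ + 1 : ℕ) : ℝ) * u⁻¹ ≤ 1 + u⁻¹ := by
    push_cast
    rw [add_mul, one_mul, ← div_eq_mul_inv]
    gcongr
    exact div_le_one_of_le₀ (Nat.floor_le hu.le) hu.le
  set q := (1 + u⁻¹)⁻¹ ^ (⌊u⌋₊ + 1)
  have hq : |q - exp (-1)| ≤ u⁻¹ :=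
    abs_inv_one_add_pow_sub_exp_neg_one_le (inv_pos.2 hu) hn₁ hn₂
  have hq₀ : 0 ≤ q := by positivity
  have hq₁ : q ≤ 1 := pow_le_one₀ (by positivity) (inv_le_one_of_one_le₀ (by simp [hu.le]))
  rw [geom_sum_inv_one_add (inv_pos.2 hu), inv_inv]
  calc |(1 - q) * (u + 1) - (1 - exp (-1)) * u| = |(exp (-1) - q) * u + (1 - q)| := by
        ring_nf
    _ ≤ |exp (-1) - q| * u + |1 - q| := by
        rw [← abs_of_pos hu, ← abs_mul, abs_of_pos hu]; exact abs_add_le _ _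
    _ ≤ u⁻¹ * u + 1 := by
        rw [abs_sub_comm]
        gcongr
        exact abs_le.2 ⟨by linarith, by linarith⟩
    _ = 2 := by field_simp; norm_num

lemma primesLE_two : primesLE 2 = {2} := by
  unfold primesLE; norm_num; decide

lemma phiS_two (s : ℝ) : phiS 2 s = log 2 / ((2 : ℝ) ^ s - 1) := by
  simp [phiS, primesLE_two]

lemma two_rpow_saddle_two {x : ℝ} (hx : 1 < x) : (2 : ℝ) ^ saddle x 2 = 1 + (logb 2 x)⁻¹ := by
  have hlogb : 0 < logb 2 x := logb_pos one_lt_two hx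
  have hroot : 0 < logb 2 (1 + (logb 2 x)⁻¹) ∧ phiS 2 (logb 2 (1 + (logb 2 x)⁻¹)) = log x := by
    refine ⟨logb_pos one_lt_two (by simpa using hlogb), ?_⟩
    rw [phiS_two, rpow_logb two_pos (by norm_num) (by positivity), add_sub_cancel_left, inv_logb,
      logb, div_div_cancel₀ (log_pos one_lt_two).ne']
  obtain ⟨-, hphi⟩ := Classical.epsilon_spec (p := fun s => 0 < s ∧ phiS 2 s = log x) ⟨_, hroot⟩
  change phiS 2 (saddle x 2) = log x at hphi
  rw [phiS_two] at hphi
  have hne : (2 : ℝ) ^ saddle x 2 - 1 ≠ 0 := by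
    intro h
    rw [h, div_zero] at hphi
    exact (log_pos hx).ne' hphi.symm
  rw [div_eq_iff hne] at hphi
  rw [inv_logb, logb, hphi]
  field_simp [(log_pos hx).ne']
  ring

lemma smoothSet_two {X : ℝ} (hX : 1 ≤ X) :
    smoothSet X 2 = (range (⌊logb 2 X⌋₊ + 1)).image (2 ^ ·) := by
  have hpow_le (k : ℕ) : 2 ^ k ≤ ⌊X⌋₊ ↔ k ≤ ⌊logb 2 X⌋₊ := by
    rw [Nat.le_floor_iff (logb_nonneg one_lt_two hX), le_logb_iff_rpow_le one_lt_two (by linarith),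
      Nat.le_floor_iff (by linarith), rpow_natCast, Nat.cast_pow, Nat.cast_ofNat]
  ext n
  simp only [smoothSet, mem_filter, mem_Icc, mem_image, mem_range, Nat.lt_succ_iff]
  constructor
  · rintro ⟨⟨hn₁, hnX⟩, hfactors⟩
    have hn₀ : n ≠ 0 := Nat.one_le_iff_ne_zero.1 hn₁
    have hn : n = 2 ^ n.primeFactorsList.length := by
      refine Nat.eq_prime_pow_of_unique_prime_dvd hn₀ fun {d} hd hdn => ?_
      have : (d : ℝ) ≤ 2 := hfactors d (Nat.mem_primeFactors.2 ⟨hd, hdn, hn₀⟩)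
      have := hd.two_le
      norm_cast at *
      omega
    rw [hn] at hnX
    exact ⟨_, (hpow_le _).1 hnX, hn.symm⟩
  · rintro ⟨k, hk, rfl⟩
    refine ⟨⟨Nat.one_le_two_pow, (hpow_le k).2 hk⟩, fun p hp => ?_⟩
    have hp2 : p ∣ 2 :=
      (Nat.prime_of_mem_primeFactors hp).dvd_of_dvd_pow (Nat.dvd_of_mem_primeFactors hp)
    exact_mod_cast Nat.le_of_dvd two_pos hp2

lemma Dxyz_two {x X : ℝ} (hx : 1 < x) (hX : 1 ≤ X) :
    Dxyz x 2 X = ∑ k ∈ range (⌊logb 2 X⌋₊ + 1), (1 + (logb 2 x)⁻¹)⁻¹ ^ k := by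
  rw [Dxyz, smoothSet_two hX, sum_image fun a _ b _ h => Nat.pow_right_injective le_rfl h]
  refine sum_congr rfl fun k _ => ?_
  rw [Nat.cast_pow, Nat.cast_ofNat, ← rpow_pow_comm zero_le_two, rpow_neg zero_le_two,
    two_rpow_saddle_two hx]

/-- There is an absolute constant `C` such that
`|D(x, 2, x) - (1 - 1/e) log x / log 2| ≤ C` for all `x ≥ 2`. -/
theorem D_x2x_approx :
    ∃ C : ℝ, 0 < C ∧
      ∀ x : ℝ, 2 ≤ x →
        |Dxyz x 2 x - (1 - Real.exp (-1)) * Real.log x / Real.log 2| ≤ C := by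
  refine ⟨2, two_pos, fun x hx => ?_⟩
  rw [Dxyz_two (by linarith) (by linarith), mul_div_assoc, ← logb]
  exact abs_geom_sum_floor_sub_le_two (logb_pos one_lt_two (by linarith))

end
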